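/- Let X be a real Hilbert space and g : X → X be twice continuously Fréchet differentiable with ‖g′(y; u)‖ ≤ κ‖u‖ and ‖g″(y; u, v)‖ ≤ κ̂‖u‖‖v‖ for all y, u, v ∈ X, and additionally assume g is a κ-contraction with 0 < κ < 1. Let x_{k−2}, x_{k−1} ∈ X with residuals w_{k−1} := g(x_{k−2}) − x_{k−2}, w_k := g(x_{k−1}) − x_{k−1}, with w_k ≠ w_{k−1} and w_k ≠ 0, and let α ∈ ℝ minimize α ↦ ‖α w_k + (1 − α) w_{k−1}‖, with α ≠ 0. For 0 < β ≤ 1 set x_k := (1 − β)(α x_{k−1} + (1 − α) x_{k−2}) + β(α g(x_{k−1}) + (1 − α) g(x_{k−2})), define θ_k := ‖α w_k + (1 − α) w_{k−1}‖/‖w_k‖ and w_{k+1} := g(x_k) − x_k, assume w_{k+1} ≠ w_k, and let α′ ∈ ℝ minimize α′ ↦ ‖α′ w_{k+1} + (1 − α′) w_k‖, with α′ ≠ 0. Then ‖w_{k+1}‖ ≤ θ_k ( (1 − β) + κβ ) ‖w_k‖ + (κ̂/(1 − κ)²) ( ‖w_k‖/|α′| + ‖w_{k−1}‖/|α| ) ‖w_k‖.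 In particular the depth m = 1 Anderson iteration satisfies ‖w_{k+1}‖ ≤ θ_k((1−β) + κβ)‖w_k‖ plus terms of second order in ‖w_k‖ and ‖w_{k−1}‖. -/

import Mathlib

/-!
With `w̄ = α w_k + (1 - α) w_{k-1}` one has `x_k - x_{k-1} = β w̄ - (1 - α)(x_{k-1} - x_{k-2})` and
`w_{k+1} = (1 - β) w̄ + [g(x_k) - g(x_{k-1}) + (1 - α)(g(x_{k-1}) - g(x_{k-2}))]`.
The bracket is the increment over `[0, 1]` of
`t ↦ g(x_{k-1} + t (x_k - x_{k-1})) + (1 - α) g(x_{k-2} + t (x_{k-1} - x_{k-2}))`, whose derivative is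
`β g'(p_t) w̄ + (1 - α)(g'(q_t) - g'(p_t))(x_{k-1} - x_{k-2})` for points `p_t`, `q_t` on the two
segments: the first term is at most `κ β ‖w̄‖`, the second is of second order by the bound on `g''`.

In a Hilbert space the optimality of `α` makes `w̄` orthogonal to `w_k - w_{k-1}`, whence
`|α| ‖w_k - w_{k-1}‖ ≤ ‖w_{k-1}‖` and `|1 - α| ‖w_k - w_{k-1}‖ ≤ ‖w_k‖`, and likewise for `α'`.
Since `x ↦ g x - x` is `(1 - κ)`-coercive, these bound the step lengths and close the estimate.
-/

open Set
open scoped RealInnerProductSpace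

section Contraction

variable {G : Type*} [SeminormedAddCommGroup G]

theorem one_sub_mul_norm_sub_le_norm_sub_sub {g : G → G} {κ : ℝ} {x y : G}
    (h : ‖g y - g x‖ ≤ κ * ‖x - y‖) : (1 - κ) * ‖y - x‖ ≤ ‖(g y - y) - (g x - x)‖ := by
  have htri := norm_sub_le (g y - g x) ((g y - y) - (g x - x))
  rw [show g y - g x - (g y - y - (g x - x)) = y - x by abel] at htri
  rw [norm_sub_rev x y] at h
  linarith

theorem abs_mul_norm_sub_le_div_one_sub {g : G → G} {κ c N : ℝ} (hκ : κ < 1) {x y : G} (hg : ‖g y - g x‖ ≤ κ * ‖x - y‖)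
    (h : |c| * ‖(g y - y) - (g x - x)‖ ≤ N) : |c| * ‖y - x‖ ≤ N / (1 - κ) := by
  rw [le_div_iff₀ (by linarith)]
  nlinarith [one_sub_mul_norm_sub_le_norm_sub_sub hg, abs_nonneg c]

end Contraction

section InnerProduct

variable {E : Type*} [NormedAddCommGroup E] [InnerProductSpace ℝ E]

theorem inner_eq_zero_of_forall_norm_le_norm_add_smul {u d : E}
    (h : ∀ t : ℝ, ‖u‖ ≤ ‖u + t • d‖) : ⟪u, d⟫ = 0 := by
  rcases eq_or_ne d 0 with rfl | hd
  · exact inner_zero_right u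
  set p := ⟪u, d⟫
  have hn : 0 < ‖d‖ ^ 2 := by positivity
  have hsq := pow_le_pow_left₀ (norm_nonneg _) (h (-p / ‖d‖ ^ 2)) 2
  rw [norm_add_sq_real, inner_smul_right, norm_smul, mul_pow, Real.norm_eq_abs, sq_abs] at hsq
  have hval : 2 * (-p / ‖d‖ ^ 2 * p) + (-p / ‖d‖ ^ 2) ^ 2 * ‖d‖ ^ 2 = -(p ^ 2 / ‖d‖ ^ 2) := by
    field_simp; ring
  have hp : p ^ 2 ≤ 0 := by
    simpa using (div_le_iff₀ hn).mp (show p ^ 2 / ‖d‖ ^ 2 ≤ 0 by linarith)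
  exact pow_eq_zero_iff two_ne_zero |>.mp (le_antisymm hp (sq_nonneg p))

theorem abs_mul_norm_le_of_forall_norm_add_smul_le {w d : E} {c : ℝ}
    (h : ∀ t : ℝ, ‖w + c • d‖ ≤ ‖w + t • d‖) : |c| * ‖d‖ ≤ ‖w‖ := by
  have horth : ⟪w + c • d, c • d⟫ = 0 := by
    rw [inner_smul_right, inner_eq_zero_of_forall_norm_le_norm_add_smul fun t => ?_, mul_zero]
    simpa [add_assoc, ← add_smul] using h (c + t)
  have hpyth := norm_sub_sq_eq_norm_sq_add_norm_sq_real horth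
  rw [add_sub_cancel_right] at hpyth
  rw [← Real.norm_eq_abs, ← norm_smul]
  nlinarith [norm_nonneg (c • d), norm_nonneg w, sq_nonneg ‖w + c • d‖]

theorem abs_mul_norm_sub_le_of_forall_norm_le {a b : E} {α : ℝ}
    (h : ∀ t : ℝ, ‖α • a + (1 - α) • b‖ ≤ ‖t • a + (1 - t) • b‖) : |α| * ‖a - b‖ ≤ ‖b‖ :=
  abs_mul_norm_le_of_forall_norm_add_smul_le fun t => by convert h t using 2 <;> module

theorem abs_one_sub_mul_norm_sub_le_of_forall_norm_le {a b : E} {α : ℝ}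
    (h : ∀ t : ℝ, ‖α • a + (1 - α) • b‖ ≤ ‖t • a + (1 - t) • b‖) :
    |1 - α| * ‖a - b‖ ≤ ‖a‖ := by
  rw [norm_sub_rev]
  exact abs_mul_norm_le_of_forall_norm_add_smul_le fun t => by
    convert h (1 - t) using 2 <;> module

end InnerProduct

section Calculus

variable {E F : Type*} [NormedAddCommGroup E] [NormedSpace ℝ E]
  [NormedAddCommGroup F] [NormedSpace ℝ F]

theorem norm_fderiv_sub_fderiv_le {f : E → F} {C : ℝ} (hC : 0 ≤ C)
    (hf : Differentiable ℝ (fderiv ℝ f))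
    (hf2 : ∀ y u v : E, ‖fderiv ℝ (fderiv ℝ f) y u v‖ ≤ C * ‖u‖ * ‖v‖) (x y : E) :
    ‖fderiv ℝ f y - fderiv ℝ f x‖ ≤ C * ‖y - x‖ := by
  have hbound (z : E) : ‖fderiv ℝ (fderiv ℝ f) z‖ ≤ C :=
    ContinuousLinearMap.opNorm_le_bound _ hC fun u =>
      ContinuousLinearMap.opNorm_le_bound _ (by positivity) fun v => by
        simpa only [mul_assoc] using hf2 z u v
  exact convex_univ.norm_image_sub_le_of_norm_fderiv_le (fun z _ => hf z) (fun z _ => hbound z)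
    (mem_univ x) (mem_univ y)

theorem hasDerivAt_apply_add_smul {g : E → F} (hg : Differentiable ℝ g) (a v : E) (t : ℝ) :
    HasDerivAt (fun s : ℝ => g (a + s • v)) (fderiv ℝ g (a + t • v) v) t :=
  (hg _).hasFDerivAt.comp_hasDerivAt t <| by
    simpa using ((hasDerivAt_id t).smul_const v).const_add a

theorem norm_sub_add_smul_sub_le {g : E → F} {κ κh β c : ℝ} (hg : Differentiable ℝ g)
    (hg1 : ∀ y u, ‖fderiv ℝ g y u‖ ≤ κ * ‖u‖)
    (hlip : ∀ x y, ‖fderiv ℝ g y - fderiv ℝ g x‖ ≤ κh * ‖y - x‖) (hκh : 0 ≤ κh) (hβ : 0 ≤ β)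
    {x₀ x₁ x₂ w : E} (hstep : x₂ - x₁ = β • w - c • (x₁ - x₀)) :
    ‖g x₂ - g x₁ + c • (g x₁ - g x₀)‖ ≤
      β * κ * ‖w‖ + |c| * κh * (‖x₁ - x₀‖ + ‖x₂ - x₁‖) * ‖x₁ - x₀‖ := by
  set e₁ := x₁ - x₀
  set e₂ := x₂ - x₁
  have hψ (t : ℝ) : HasDerivAt (fun s : ℝ => g (x₁ + s • e₂) + c • g (x₀ + s • e₁))
      (fderiv ℝ g (x₁ + t • e₂) e₂ + c • fderiv ℝ g (x₀ + t • e₁) e₁) t :=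
    (hasDerivAt_apply_add_smul hg x₁ e₂ t).add
      ((hasDerivAt_apply_add_smul hg x₀ e₁ t).const_smul c)
  have hbound : ∀ t ∈ Ico (0 : ℝ) 1,
      ‖fderiv ℝ g (x₁ + t • e₂) e₂ + c • fderiv ℝ g (x₀ + t • e₁) e₁‖ ≤
        β * κ * ‖w‖ + |c| * κh * (‖e₁‖ + ‖e₂‖) * ‖e₁‖ := by
    rintro t ⟨ht0, ht1⟩
    set p := x₁ + t • e₂
    set q := x₀ + t • e₁
    have hsplit : fderiv ℝ g p e₂ + c • fderiv ℝ g q e₁ =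
        β • fderiv ℝ g p w + c • (fderiv ℝ g q - fderiv ℝ g p) e₁ := by
      rw [hstep, map_sub, map_smul, map_smul, sub_apply]; module
    have hqp : ‖q - p‖ ≤ ‖e₁‖ + ‖e₂‖ := by
      have : q - p = -((1 - t) • e₁ + t • e₂) := by simp only [q, p, e₁]; module
      rw [this, norm_neg]
      refine (norm_add_le _ _).trans ?_
      rw [norm_smul, norm_smul, Real.norm_of_nonneg (by linarith), Real.norm_of_nonneg ht0]
      nlinarith [norm_nonneg e₁, norm_nonneg e₂]
    have hdiff : ‖(fderiv ℝ g q - fderiv ℝ g p) e₁‖ ≤ κh * (‖e₁‖ + ‖e₂‖) * ‖e₁‖ :=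
      ((fderiv ℝ g q - fderiv ℝ g p).le_opNorm e₁).trans <| by
        gcongr
        exact (hlip p q).trans (by gcongr)
    rw [hsplit]
    refine (norm_add_le _ _).trans ?_
    rw [norm_smul, norm_smul, Real.norm_of_nonneg hβ, Real.norm_eq_abs, mul_assoc β,
      mul_assoc |c|, mul_assoc |c|]
    gcongr
    exact hg1 p w
  simpa [e₁, e₂, smul_sub, add_sub_add_comm] using
    norm_image_sub_le_of_norm_deriv_le_segment_01' (fun t _ => (hψ t).hasDerivWithinAt) hbound

theorem norm_residual_le_of_anderson_step {g : E → E} {κ κh α β : ℝ}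
    (hg : Differentiable ℝ g) (hg1 : ∀ y u, ‖fderiv ℝ g y u‖ ≤ κ * ‖u‖)
    (hlip : ∀ x y, ‖fderiv ℝ g y - fderiv ℝ g x‖ ≤ κh * ‖y - x‖) (hκh : 0 ≤ κh)
    (hβ0 : 0 ≤ β) (hβ1 : β ≤ 1) {x₀ x₁ x₂ : E}
    (hx₂ : x₂ = (1 - β) • (α • x₁ + (1 - α) • x₀) + β • (α • g x₁ + (1 - α) • g x₀)) :
    ‖g x₂ - x₂‖ ≤ ((1 - β) + κ * β) * ‖α • (g x₁ - x₁) + (1 - α) • (g x₀ - x₀)‖ +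
      |1 - α| * κh * (‖x₁ - x₀‖ + ‖x₂ - x₁‖) * ‖x₁ - x₀‖ := by
  set w := α • (g x₁ - x₁) + (1 - α) • (g x₀ - x₀)
  have hstep : x₂ - x₁ = β • w - (1 - α) • (x₁ - x₀) := by rw [hx₂]; module
  have hsplit : g x₂ - x₂ = (1 - β) • w + (g x₂ - g x₁ + (1 - α) • (g x₁ - g x₀)) := by
    nth_rw 2 [hx₂]; module
  calc ‖g x₂ - x₂‖ ≤ ‖(1 - β) • w‖ + ‖g x₂ - g x₁ + (1 - α) • (g x₁ - g x₀)‖ := by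
        rw [hsplit]; exact norm_add_le _ _
    _ ≤ (1 - β) * ‖w‖ + (β * κ * ‖w‖ + |1 - α| * κh * (‖x₁ - x₀‖ + ‖x₂ - x₁‖) * ‖x₁ - x₀‖) := by
        rw [norm_smul, Real.norm_of_nonneg (by linarith)]
        gcongr
        exact norm_sub_add_smul_sub_le hg hg1 hlip hκh hβ0 hstep
    _ = _ := by ring

end Calculus

theorem stmt_16_general {X : Type*} [NormedAddCommGroup X] [InnerProductSpace ℝ X]
    (g : X → X) (κ κh : ℝ) (hκ1 : κ < 1) (hκh : 0 < κh)
    (hC2 : ContDiff ℝ 2 g)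
    (hg1 : ∀ y u : X, ‖fderiv ℝ g y u‖ ≤ κ * ‖u‖)
    (hg2 : ∀ y u v : X, ‖fderiv ℝ (fderiv ℝ g) y u v‖ ≤ κh * ‖u‖ * ‖v‖)
    (hg : ∀ x y : X, ‖g y - g x‖ ≤ κ * ‖x - y‖)
    (xkm2 xkm1 : X)
    (wkm1 wk : X) (hwkm1 : wkm1 = g xkm2 - xkm2) (hwk : wk = g xkm1 - xkm1)
    (α : ℝ)
    (hmin : ∀ t : ℝ, ‖α • wk + (1 - α) • wkm1‖ ≤ ‖t • wk + (1 - t) • wkm1‖)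
    (hα0 : α ≠ 0)
    (β : ℝ) (hβ0 : 0 < β) (hβ1 : β ≤ 1)
    (xk : X)
    (hxk : xk = (1 - β) • (α • xkm1 + (1 - α) • xkm2) +
      β • (α • g xkm1 + (1 - α) • g xkm2))
    (θ : ℝ) (hθ : θ = ‖α • wk + (1 - α) • wkm1‖ / ‖wk‖)
    (wk1 : X) (hwk1 : wk1 = g xk - xk)
    (α' : ℝ)
    (hmin' : ∀ t : ℝ, ‖α' • wk1 + (1 - α') • wk‖ ≤ ‖t • wk1 + (1 - t) • wk‖)
    (hα'0 : α' ≠ 0) :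
    ‖wk1‖ ≤ θ * ((1 - β) + κ * β) * ‖wk‖ +
      (κh / (1 - κ) ^ 2) * (‖wk‖ / |α'| + ‖wkm1‖ / |α|) * ‖wk‖ := by
  have hlip := norm_fderiv_sub_fderiv_le hκh.le
    ((hC2.fderiv_right (m := 1) le_rfl).differentiable one_ne_zero) hg2
  have hres := norm_residual_le_of_anderson_step (hC2.differentiable two_ne_zero) hg1 hlip
    hκh.le hβ0.le hβ1 hxk
  rw [← hwk1, ← hwk, ← hwkm1] at hres
  have hθwk : ‖α • wk + (1 - α) • wkm1‖ = θ * ‖wk‖ := by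
    rw [hθ, div_mul_cancel_of_imp fun h0 => ?_]
    exact le_antisymm (by simpa [h0] using hmin 1) (norm_nonneg _)
  have h₁ : |1 - α| * ‖xkm1 - xkm2‖ ≤ ‖wk‖ / (1 - κ) := abs_mul_norm_sub_le_div_one_sub hκ1
    (hg _ _) (by rw [← hwk, ← hwkm1]; exact abs_one_sub_mul_norm_sub_le_of_forall_norm_le hmin)
  have h₂ : |α| * ‖xkm1 - xkm2‖ ≤ ‖wkm1‖ / (1 - κ) := abs_mul_norm_sub_le_div_one_sub hκ1
    (hg _ _) (by rw [← hwk, ← hwkm1]; exact abs_mul_norm_sub_le_of_forall_norm_le hmin)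
  have h₃ : |α'| * ‖xk - xkm1‖ ≤ ‖wk‖ / (1 - κ) := abs_mul_norm_sub_le_div_one_sub hκ1
    (hg _ _) (by rw [← hwk1, ← hwk]; exact abs_mul_norm_sub_le_of_forall_norm_le hmin')
  have hrem : |1 - α| * κh * (‖xkm1 - xkm2‖ + ‖xk - xkm1‖) * ‖xkm1 - xkm2‖ ≤
      (κh / (1 - κ) ^ 2) * (‖wk‖ / |α'| + ‖wkm1‖ / |α|) * ‖wk‖ := by
    have hαpos := abs_pos.mpr hα0
    have hα'pos := abs_pos.mpr hα'0
    calc _ = κh * (|1 - α| * ‖xkm1 - xkm2‖) * (‖xkm1 - xkm2‖ + ‖xk - xkm1‖) := by ring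
      _ ≤ κh * (‖wk‖ / (1 - κ)) * (‖wkm1‖ / (1 - κ) / |α| + ‖wk‖ / (1 - κ) / |α'|) := by
          gcongr
          · rwa [le_div_iff₀' hαpos]
          · rwa [le_div_iff₀' hα'pos]
      _ = _ := by field_simp; ring
  rw [hθwk] at hres
  linarith

/-- the depth `m = 1` damped Anderson iteration with a contractive `g`
satisfies
`‖w_{k+1}‖ ≤ θ_k ((1-β) + κβ) ‖w_k‖ + (κ̂/(1-κ)²)(‖w_k‖/|α'| + ‖w_{k-1}‖/|α|) ‖w_k‖`. -/
theorem stmt_16 {X : Type*} [NormedAddCommGroup X] [InnerProductSpace ℝ X] [CompleteSpace X]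
    (g : X → X) (κ κh : ℝ) (hκ0 : 0 < κ) (hκ1 : κ < 1) (hκh : 0 < κh)
    (hC2 : ContDiff ℝ 2 g)
    (hg1 : ∀ y u : X, ‖fderiv ℝ g y u‖ ≤ κ * ‖u‖)
    (hg2 : ∀ y u v : X, ‖fderiv ℝ (fderiv ℝ g) y u v‖ ≤ κh * ‖u‖ * ‖v‖)
    (hg : ∀ x y : X, ‖g y - g x‖ ≤ κ * ‖x - y‖)
    (xkm2 xkm1 : X)
    (wkm1 wk : X) (hwkm1 : wkm1 = g xkm2 - xkm2) (hwk : wk = g xkm1 - xkm1)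
    (hne : wk ≠ wkm1) (hwk0 : wk ≠ 0)
    (α : ℝ)
    (hmin : ∀ t : ℝ, ‖α • wk + (1 - α) • wkm1‖ ≤ ‖t • wk + (1 - t) • wkm1‖)
    (hα0 : α ≠ 0)
    (β : ℝ) (hβ0 : 0 < β) (hβ1 : β ≤ 1)
    (xk : X)
    (hxk : xk = (1 - β) • (α • xkm1 + (1 - α) • xkm2) +
      β • (α • g xkm1 + (1 - α) • g xkm2))
    (θ : ℝ) (hθ : θ = ‖α • wk + (1 - α) • wkm1‖ / ‖wk‖)
    (wk1 : X) (hwk1 : wk1 = g xk - xk) (hne1 : wk1 ≠ wk)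
    (α' : ℝ)
    (hmin' : ∀ t : ℝ, ‖α' • wk1 + (1 - α') • wk‖ ≤ ‖t • wk1 + (1 - t) • wk‖)
    (hα'0 : α' ≠ 0) :
    ‖wk1‖ ≤ θ * ((1 - β) + κ * β) * ‖wk‖ +
      (κh / (1 - κ) ^ 2) * (‖wk‖ / |α'| + ‖wkm1‖ / |α|) * ‖wk‖ :=
  stmt_16_general g κ κh hκ1 hκh hC2 hg1 hg2 hg xkm2 xkm1 wkm1 wk hwkm1 hwk α hmin hα0 β hβ0 hβ1 xk
    hxk θ hθ wk1 hwk1 α' hmin' hα'0
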